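/- arXiv:1502.05569 — 2 statements merged into one kernel-verified Lean document; each statement's English description precedes it below -/
import Mathlib

section
/- For any integer d ≥ 2, the minimal number of summands needed to write 4(2^d − 1) as a sum of integers of the form 2^{c} − 1 with c ≥ 1 is exactly 4. -/
lemma pow2_split {a : ℕ} (ha : 1 ≤ a) : 2 ^ a = 2 * 2 ^ (a - 1) := by
  conv_lhs => rw [show a = (a - 1) + 1 by omega]
  rw [pow_succ]; ring

lemma odd_pow2 {k : ℕ} (h : 2 ^ k % 2 = 1) : 2 ^ k = 1 := by
  cases k with
  | zero => rfl
  | succ n => simp [pow_succ, Nat.mul_mod] at h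

/-- For `d ≥ 2`, the minimal number of summands of the form `2^c − 1` (with `c ≥ 1`) needed
to write `4(2^d − 1)` is exactly `4`, i.e. `μ(4(2^d−1)) = 4`. -/
theorem stmt_6 (d : ℕ) (hd : 2 ≤ d) :
    IsLeast {r : ℕ | ∃ c : Fin r → ℕ, (∀ i, 1 ≤ c i) ∧
      ∑ i, (2 ^ c i - 1) = 4 * (2 ^ d - 1)} 4 := by
  have hm : 1 ≤ 2 ^ (d - 1) := Nat.one_le_two_pow
  have hdd : 2 ^ d = 2 * 2 ^ (d - 1) := pow2_split (by omega)
  have hd4 : 4 ≤ 2 ^ d := by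
    calc (4 : ℕ) = 2 ^ 2 := rfl
    _ ≤ 2 ^ d := Nat.pow_le_pow_right (by norm_num) hd
  constructor
  · refine ⟨![d + 1, d, d - 1, d - 1], ?_, ?_⟩
    · intro i; fin_cases i <;> simp <;> omega
    · rw [Fin.sum_univ_four]
      simp only [Matrix.cons_val_zero, Matrix.cons_val_one, Matrix.cons_val_two, Matrix.cons_val_three, Matrix.head_cons, Matrix.tail_cons]
      have h1 : 2 ^ (d + 1) = 4 * 2 ^ (d - 1) := by
        rw [pow_succ, hdd]; ring
      rw [h1, hdd]
      omega
  · rintro r ⟨c, hc, hsum⟩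
    by_contra h
    push_neg at h
    interval_cases r
    · simp at hsum; omega
    · rw [Fin.sum_univ_one] at hsum
      have h0 : 2 ^ (c 0) = 2 * 2 ^ (c 0 - 1) := pow2_split (hc 0)
      omega
    · rw [Fin.sum_univ_two] at hsum
      have h0 : 2 ^ (c 0) = 2 * 2 ^ (c 0 - 1) := pow2_split (hc 0)
      have h1 : 2 ^ (c 1) = 2 * 2 ^ (c 1 - 1) := pow2_split (hc 1)
      set x := 2 ^ (c 0 - 1) with hx
      set w := 2 ^ (c 1 - 1) with hw
      have hx1 : 1 ≤ x := Nat.one_le_two_pow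
      have hw1 : 1 ≤ w := Nat.one_le_two_pow
      -- x + w = 2 * 2^d - 1, odd, so one of them is odd hence 1
      have hxw : x + w = 2 * 2 ^ d - 1 := by omega
      have key : ∀ e : ℕ, 2 ^ e = 2 * 2 ^ d - 2 → False := by
        intro e he
        have he1 : 1 ≤ e := by
          rcases Nat.eq_zero_or_pos e with h' | h'
          · simp [h'] at he; omega
          · exact h'
        have h2 : 2 ^ e = 2 * 2 ^ (e - 1) := pow2_split he1
        have h3 : 2 ^ (e - 1) = 2 ^ d - 1 := by omega
        have h4 : 2 ^ (e - 1) % 2 = 1 := by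
          rw [h3]; omega
        have := odd_pow2 h4
        omega
      rcases Nat.even_or_odd x with hex | hox
      · rcases Nat.even_or_odd w with hew | how
        · obtain ⟨x', hx'⟩ := hex
          obtain ⟨w', hw'⟩ := hew
          omega
        · have : w = 1 := odd_pow2 (Nat.odd_iff.mp how)
          exact key (c 0 - 1) (by omega)
      · have : x = 1 := odd_pow2 (Nat.odd_iff.mp hox)
        exact key (c 1 - 1) (by omega)
    · rw [Fin.sum_univ_three] at hsum
      have h0 : 2 ^ (c 0) = 2 * 2 ^ (c 0 - 1) := pow2_split (hc 0)
      have h1 : 2 ^ (c 1) = 2 * 2 ^ (c 1 - 1) := pow2_split (hc 1)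
      have h2 : 2 ^ (c 2) = 2 * 2 ^ (c 2 - 1) := pow2_split (hc 2)
      have := @Nat.one_le_two_pow (c 0 - 1)
      have := @Nat.one_le_two_pow (c 1 - 1)
      have := @Nat.one_le_two_pow (c 2 - 1)
      omega
end

section
/- Let n be a positive integer and r = μ(n), the minimal number of summands of the form 2^c − 1 (c ≥ 1) needed to write n. Then there exists at most one sequence of positive integers d_1 > d_2 > ... > d_{r−1} ≥ d_r > 0 with n = ∑_{i=1}^r (2^{d_i} − 1). -/
/-!
Writing `n = ∑ (2 ^ d i - 1)` with `r` summands is the same as writing `n + r = ∑ 2 ^ d i`.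
If the exponents are strictly decreasing they are the binary digits of `n + r`, which then has
exactly `r` ones; if the last two exponents agree, merging `2 ^ a + 2 ^ a = 2 ^ (a + 1)` writes
`n + r` with `r - 1` powers of two, so it has fewer than `r` ones. Hence two minimal spikes of `n`
are either both strictly decreasing, and then equal, or both end in a repeated pair. In the latter
case the merged sequences are minimal spikes of `n + 1`, because `μ n ≤ μ (n + 1) + 1`, and
induction on `r` applies.
-/

namespace Nat

theorem length_bitIndices_add_two_pow_le (a c : ℕ) :
    (a + 2 ^ c).bitIndices.length ≤ a.bitIndices.length + 1 := by
  induction a using Nat.strong_induction_on generalizing c with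
  | _ a ih =>
  obtain ⟨b, rfl | rfl⟩ := Nat.even_or_odd' a <;> rcases c with _ | c
  · simp
  · rcases Nat.eq_zero_or_pos b with rfl | hb
    · simp
    · rw [pow_succ', ← mul_add]
      simpa using ih b (by omega) c
  · rw [pow_zero, show 2 * b + 1 + 1 = 2 * (b + 1) by ring]
    have := ih b (by omega) 0
    simp only [pow_zero, bitIndices_two_mul, bitIndices_two_mul_add_one, List.length_map,
      List.length_cons] at this ⊢
    omega
  · rw [pow_succ', show 2 * b + 1 + 2 * 2 ^ c = 2 * (b + 2 ^ c) + 1 by ring]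
    simpa using ih b (by omega) c

theorem length_bitIndices_sum_two_pow_le {k : ℕ} (f : Fin k → ℕ) :
    (∑ i, 2 ^ f i).bitIndices.length ≤ k := by
  induction k with
  | zero => simp
  | succ k ih =>
    rw [Fin.sum_univ_castSucc]
    exact (length_bitIndices_add_two_pow_le _ _).trans (Nat.add_le_add_right (ih _) 1)

theorem bitIndices_sum_two_pow_of_strictAnti {k : ℕ} {f : Fin k → ℕ} (hf : StrictAnti f) :
    (∑ i, 2 ^ f i).bitIndices = List.ofFn (f ∘ Fin.rev) := by
  have hsorted : (List.ofFn (f ∘ Fin.rev)).SortedLT :=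
    List.sortedLT_ofFn_iff.2 (hf.comp Fin.rev_strictAnti)
  have hsum : ∑ i, 2 ^ f i = ((List.ofFn (f ∘ Fin.rev)).map (2 ^ ·)).sum := by
    rw [List.map_ofFn, List.sum_ofFn]
    exact (Equiv.sum_comp Fin.revPerm (fun i => 2 ^ f i)).symm
  rw [hsum, bitIndices_sum_map_two_pow hsorted]

theorem length_bitIndices_sum_two_pow_of_strictAnti {k : ℕ} {f : Fin k → ℕ}
    (hf : StrictAnti f) :
    (∑ i, 2 ^ f i).bitIndices.length = k := by
  rw [bitIndices_sum_two_pow_of_strictAnti hf, List.length_ofFn]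

theorem sum_two_pow_sub_one_add_card {k : ℕ} (f : Fin k → ℕ) :
    ∑ i, (2 ^ f i - 1) + k = ∑ i, 2 ^ f i :=
  calc ∑ i, (2 ^ f i - 1) + k = ∑ i, (2 ^ f i - 1 + 1) := by simp [Finset.sum_add_distrib]
    _ = ∑ i, 2 ^ f i := by simp only [Nat.sub_add_cancel Nat.one_le_two_pow]

end Nat

theorem StrictAnti.eq_of_sum_two_pow_eq {k : ℕ} {f g : Fin k → ℕ} (hf : StrictAnti f)
    (hg : StrictAnti g) (h : ∑ i, 2 ^ f i = ∑ i, 2 ^ g i) : f = g :=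
  Fin.rev_surjective.injective_comp_right <| List.ofFn_injective <| by
    rw [← Nat.bitIndices_sum_two_pow_of_strictAnti hf,
      ← Nat.bitIndices_sum_two_pow_of_strictAnti hg, h]

theorem Fin.exists_eq_add_two_of_not_strictAnti {α : Type*} [Preorder α] {r : ℕ}
    {d : Fin r → α} (h : ¬ StrictAnti d) : ∃ s, r = s + 2 := by
  have : ¬ Subsingleton (Fin r) := fun _ => h (Subsingleton.strictAnti d)
  exact ⟨r - 2, by rw [Fin.subsingleton_iff_le_one] at this; omega⟩

-- `μ n` is the least element of this set.
def mersenneSumLengths (n : ℕ) : Set ℕ :=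
  {m | ∃ c : Fin m → ℕ, (∀ i, 1 ≤ c i) ∧ ∑ i, (2 ^ c i - 1) = n}

-- Drop a summand `2 ^ 1 - 1`, or split `2 ^ c - 2 = (2 ^ (c - 1) - 1) + (2 ^ (c - 1) - 1)`.
theorem exists_le_add_one_mem_mersenneSumLengths {n m : ℕ}
    (hm : m ∈ mersenneSumLengths (n + 1)) : ∃ k ≤ m + 1, k ∈ mersenneSumLengths n := by
  obtain ⟨c, hc1, hcn⟩ := hm
  cases m with
  | zero => simp at hcn
  | succ m =>
    rw [Fin.sum_univ_succ] at hcn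
    rcases (hc1 0).eq_or_lt with h0 | h0
    · refine ⟨m, by omega, Fin.tail c, fun i => hc1 i.succ, ?_⟩
      simp only [← h0, pow_one, Fin.tail] at hcn ⊢
      omega
    · have hsplit : 2 ^ c 0 - 1 = (2 ^ (c 0 - 1) - 1) + (2 ^ (c 0 - 1) - 1) + 1 := by
        have h2 : 2 ^ c 0 = 2 * 2 ^ (c 0 - 1) := by rw [← pow_succ']; congr 1; omega
        have := @Nat.one_le_two_pow (c 0 - 1)
        omega
      have hc0 : 1 ≤ c 0 - 1 := Nat.le_sub_one_of_lt h0
      refine ⟨m + 2, le_rfl, Fin.cons (c 0 - 1) (Fin.cons (c 0 - 1) (Fin.tail c)),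
        Fin.cases hc0 (Fin.cases hc0 fun i => hc1 i.succ), ?_⟩
      simp only [Fin.sum_univ_succ, Fin.cons_zero, Fin.cons_succ, Fin.tail] at hcn ⊢
      omega

theorem isLeast_mersenneSumLengths_succ {n r : ℕ}
    (hr : IsLeast (mersenneSumLengths n) (r + 1)) (h : r ∈ mersenneSumLengths (n + 1)) :
    IsLeast (mersenneSumLengths (n + 1)) r := by
  refine ⟨h, fun m hm => ?_⟩
  obtain ⟨k, hk, hkn⟩ := exists_le_add_one_mem_mersenneSumLengths hm
  have := hr.2 hkn
  omega

def mergeLast {s : ℕ} (d : Fin (s + 2) → ℕ) : Fin (s + 1) → ℕ :=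
  Fin.snoc (Fin.init (Fin.init d)) (d (Fin.last (s + 1)) + 1)

section mergeLast

variable {s : ℕ}

@[simp] theorem mergeLast_last (d : Fin (s + 2) → ℕ) :
    mergeLast d (Fin.last s) = d (Fin.last (s + 1)) + 1 :=
  Fin.snoc_last _ _

@[simp] theorem mergeLast_castSucc (d : Fin (s + 2) → ℕ) (i : Fin s) :
    mergeLast d i.castSucc = d i.castSucc.castSucc :=
  Fin.snoc_castSucc _ _ _

theorem sum_two_pow_mergeLast {d : Fin (s + 2) → ℕ}
    (h : d (Fin.last s).castSucc = d (Fin.last (s + 1))) :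
    ∑ i, 2 ^ mergeLast d i = ∑ i, 2 ^ d i := by
  simp only [Fin.sum_univ_castSucc, mergeLast_castSucc, mergeLast_last, h, pow_succ]
  ring

theorem sum_two_pow_sub_one_mergeLast {d : Fin (s + 2) → ℕ}
    (h : d (Fin.last s).castSucc = d (Fin.last (s + 1))) :
    ∑ i, (2 ^ mergeLast d i - 1) = ∑ i, (2 ^ d i - 1) + 1 := by
  have hd := Nat.sum_two_pow_sub_one_add_card d
  have hm := Nat.sum_two_pow_sub_one_add_card (mergeLast d)
  rw [sum_two_pow_mergeLast h] at hm
  omega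

theorem mergeLast_injOn : Set.InjOn mergeLast
    {d : Fin (s + 2) → ℕ | d (Fin.last s).castSucc = d (Fin.last (s + 1))} := by
  intro d (hd : _ = _) e (he : _ = _) h
  have hlast : d (Fin.last (s + 1)) = e (Fin.last (s + 1)) := by
    simpa using congrFun h (Fin.last s)
  have hinit : Fin.init (Fin.init d) = Fin.init (Fin.init e) := by
    simpa [mergeLast] using congrArg Fin.init h
  rw [← Fin.snoc_init_self d, ← Fin.snoc_init_self e, ← Fin.snoc_init_self (Fin.init d),
    ← Fin.snoc_init_self (Fin.init e), hinit]
  simp [Fin.init, hd, he, hlast]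

end mergeLast

-- `d 0 > d 1 > ⋯ > d (r - 2) ≥ d (r - 1) > 0`
structure IsSpikeExponents {r : ℕ} (d : Fin r → ℕ) : Prop where
  pos : ∀ i, 0 < d i
  antitone : Antitone d
  lt_of_lt : ∀ i j : Fin r, i < j → (j : ℕ) + 2 ≤ r → d j < d i

namespace IsSpikeExponents

section mergeLast

variable {s : ℕ} {d : Fin (s + 2) → ℕ}

theorem strictAnti_of_lt (hd : IsSpikeExponents d)
    (h : d (Fin.last (s + 1)) < d (Fin.last s).castSucc) : StrictAnti d := by
  refine Fin.strictAnti_iff_succ_lt.2 fun i => ?_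
  induction i using Fin.lastCases with
  | last => simpa using h
  | cast i => exact hd.lt_of_lt _ _ (Fin.castSucc_lt_succ) (by simp)

theorem last_eq_of_not_strictAnti (hd : IsSpikeExponents d) (h : ¬ StrictAnti d) :
    d (Fin.last s).castSucc = d (Fin.last (s + 1)) :=
  ((hd.antitone (Fin.le_last _)).lt_or_eq.resolve_left (mt hd.strictAnti_of_lt h)).symm

theorem mergeLast (hd : IsSpikeExponents d) : IsSpikeExponents (mergeLast d) where
  pos i := by
    induction i using Fin.lastCases <;> simp [hd.pos]
  antitone := by
    refine antitone_iff_forall_lt.2 fun i j hij => ?_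
    induction j using Fin.lastCases with
    | last =>
      induction i using Fin.lastCases with
      | last => exact absurd hij (lt_irrefl _)
      | cast i =>
        have := hd.lt_of_lt i.castSucc.castSucc (Fin.last s).castSucc
          (Fin.castSucc_lt_castSucc_iff.2 i.castSucc_lt_last) (by simp)
        simpa using (hd.antitone (Fin.le_last _)).trans_lt this
    | cast j =>
      induction i using Fin.lastCases with
      | last => exact absurd hij (not_lt.2 (Fin.le_last _))
      | cast i => simpa using hd.antitone (Fin.castSucc_le_castSucc_iff.2
          (Fin.castSucc_le_castSucc_iff.2 hij.le))
  lt_of_lt i j hij hj := by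
    induction j using Fin.lastCases with
    | last => simp at hj
    | cast j =>
      induction i using Fin.lastCases with
      | last => exact absurd hij (not_lt.2 (Fin.le_last _))
      | cast i =>
        simpa using hd.lt_of_lt _ _
          (Fin.castSucc_lt_castSucc_iff.2 (Fin.castSucc_lt_castSucc_iff.2 hij)) (by simp at hj ⊢)

end mergeLast

variable {r : ℕ} {d e : Fin r → ℕ}

theorem length_bitIndices_sum_lt (hd : IsSpikeExponents d) (h : ¬ StrictAnti d) :
    (∑ i, 2 ^ d i).bitIndices.length < r := by
  obtain ⟨s, rfl⟩ := Fin.exists_eq_add_two_of_not_strictAnti h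
  rw [← sum_two_pow_mergeLast (hd.last_eq_of_not_strictAnti h)]
  exact (Nat.length_bitIndices_sum_two_pow_le _).trans_lt (by omega)

theorem eq_of_isLeast {n : ℕ} (hr : IsLeast (mersenneSumLengths n) r)
    (hd : IsSpikeExponents d) (he : IsSpikeExponents e) (hdn : ∑ i, (2 ^ d i - 1) = n)
    (hen : ∑ i, (2 ^ e i - 1) = n) : d = e := by
  induction r using Nat.strong_induction_on generalizing n with
  | _ r ih =>
  have hdn' : ∑ i, 2 ^ d i = n + r := by rw [← Nat.sum_two_pow_sub_one_add_card, hdn]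
  have hen' : ∑ i, 2 ^ e i = n + r := by rw [← Nat.sum_two_pow_sub_one_add_card, hen]
  by_cases hds : StrictAnti d <;> by_cases hes : StrictAnti e
  · exact hds.eq_of_sum_two_pow_eq hes (hdn'.trans hen'.symm)
  · have := he.length_bitIndices_sum_lt hes
    rw [hen', ← hdn', Nat.length_bitIndices_sum_two_pow_of_strictAnti hds] at this
    exact (lt_irrefl r this).elim
  · have := hd.length_bitIndices_sum_lt hds
    rw [hdn', ← hen', Nat.length_bitIndices_sum_two_pow_of_strictAnti hes] at this
    exact (lt_irrefl r this).elim
  · obtain ⟨s, rfl⟩ := Fin.exists_eq_add_two_of_not_strictAnti hds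
    have hd2 := hd.last_eq_of_not_strictAnti hds
    have he2 := he.last_eq_of_not_strictAnti hes
    have hdm := sum_two_pow_sub_one_mergeLast hd2
    have hem := sum_two_pow_sub_one_mergeLast he2
    have hr' : IsLeast (mersenneSumLengths (n + 1)) (s + 1) :=
      isLeast_mersenneSumLengths_succ hr ⟨_, fun i => hd.mergeLast.pos i, by omega⟩
    exact mergeLast_injOn hd2 he2 <|
      ih (s + 1) (by omega) hr' hd.mergeLast he.mergeLast (by omega) (by omega)

end IsSpikeExponents

theorem stmt_9_general (n r : ℕ)
    (hr : IsLeast {m : ℕ | ∃ c : Fin m → ℕ, (∀ i, 1 ≤ c i) ∧ ∑ i, (2 ^ c i - 1) = n} r)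
    (d e : Fin r → ℕ)
    (hd0 : ∀ i, 0 < d i)
    (hdmono : ∀ i j : Fin r, i < j → d j ≤ d i)
    (hdstrict : ∀ i j : Fin r, i < j → (j : ℕ) + 2 ≤ r → d j < d i)
    (hdsum : ∑ i, (2 ^ d i - 1) = n)
    (he0 : ∀ i, 0 < e i)
    (hemono : ∀ i j : Fin r, i < j → e j ≤ e i)
    (hestrict : ∀ i j : Fin r, i < j → (j : ℕ) + 2 ≤ r → e j < e i)
    (hesum : ∑ i, (2 ^ e i - 1) = n) :
    d = e :=
  IsSpikeExponents.eq_of_isLeast hr ⟨hd0, antitone_iff_forall_lt.2 hdmono, hdstrict⟩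
    ⟨he0, antitone_iff_forall_lt.2 hemono, hestrict⟩ hdsum hesum

/-- Uniqueness of the minimal spike: if `r = μ(n)` is the least number of summands of the form
`2^c − 1` (`c ≥ 1`) needed to write `n > 0`, then there is at most one sequence
`d₁ > d₂ > ⋯ > d_{r−1} ≥ d_r > 0` with `n = ∑ (2^{d_i} − 1)`. -/
theorem stmt_9 (n r : ℕ) (hn : 0 < n)
    (hr : IsLeast {m : ℕ | ∃ c : Fin m → ℕ, (∀ i, 1 ≤ c i) ∧ ∑ i, (2 ^ c i - 1) = n} r)
    (d e : Fin r → ℕ)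
    (hd0 : ∀ i, 0 < d i)
    (hdmono : ∀ i j : Fin r, i < j → d j ≤ d i)
    (hdstrict : ∀ i j : Fin r, i < j → (j : ℕ) + 2 ≤ r → d j < d i)
    (hdsum : ∑ i, (2 ^ d i - 1) = n)
    (he0 : ∀ i, 0 < e i)
    (hemono : ∀ i j : Fin r, i < j → e j ≤ e i)
    (hestrict : ∀ i j : Fin r, i < j → (j : ℕ) + 2 ≤ r → e j < e i)
    (hesum : ∑ i, (2 ^ e i - 1) = n) :
    d = e :=
  stmt_9_general n r hr d e hd0 hdmono hdstrict hdsum he0 hemono hestrict hesum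
end
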